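/- Let A, B be C*-algebras, δ : A → M(A ⊗ B) a *-homomorphism, ε : C → M(C ⊗ B) a *-homomorphism, and φ : A → C a surjective *-homomorphism satisfying (φ ⊗ id) ∘ δ = ε ∘ φ (equivariance). If the closed linear span of δ(A)(1 ⊗ B) equals A ⊗ B, then the closed linear span of ε(C)(1 ⊗ B) equals C ⊗ B. -/

import Mathlib

open MultiplierAlgebra

/-- An abstract presentation of the minimal (spatial) C*-tensor product `A ⊗ B`:
a C*-algebra `T` together with the elementary-tensor map `tmul`, such that the
elementary tensors have dense linear span in `T`. -/
structure MinTensorProduct (A B T : Type*) [NonUnitalCStarAlgebra A]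
    [NonUnitalCStarAlgebra B] [NonUnitalCStarAlgebra T] where
  tmul : A → B → T
  dense_span : closure (Submodule.span ℂ {t : T | ∃ a b, t = tmul a b} : Set T) = Set.univ

/-!
Equivariance, together with the injectivity of `T → 𝓜(ℂ, T)`, shows that `Φ = φ ⊗ id` maps
each generator `δ(a)(1 ⊗ b)` to `ε(φ a)(1 ⊗ b)`. Since `φ` is onto, `Φ` has dense range, so it
carries the dense span of the former generators to a dense subset of the span of the latter.
-/

open scoped CStarAlgebra

theorem DoubleCentralizer.coe_injective {𝕜 A : Type*} [NontriviallyNormedField 𝕜]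
    [NonUnitalNormedRing A] [NormedSpace 𝕜 A] [SMulCommClass 𝕜 A A] [IsScalarTower 𝕜 A A]
    [RegularNormedAlgebra 𝕜 A] :
    Function.Injective (DoubleCentralizer.coe 𝕜 : A → 𝓜(𝕜, A)) := fun _ _ h =>
  (ContinuousLinearMap.isometry_mul 𝕜 A).injective (congrArg (·.fst) h)

section DenseSpan

variable {R M N : Type*} [Semiring R] [AddCommMonoid M] [Module R M]
  [TopologicalSpace N] [AddCommMonoid N] [Module R N]

theorem LinearMap.denseRange_of_dense_span_subset_range (f : M →ₗ[R] N) {s : Set N}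
    (hs : Dense (Submodule.span R s : Set N)) (hsf : s ⊆ Set.range f) : DenseRange f :=
  hs.mono (Submodule.span_le.2 hsf : Submodule.span R s ≤ LinearMap.range f)

theorem Dense.span_image_of_denseRange [TopologicalSpace M] {f : M →ₗ[R] N}
    (hf : Continuous f) (hfd : DenseRange f) {s : Set M}
    (hs : Dense (Submodule.span R s : Set M)) : Dense (Submodule.span R (f '' s) : Set N) :=
  (hfd.dense_image hf hs).mono (Submodule.image_span_subset_span f s)

end DenseSpan

/-- Nondegeneracy passes to equivariant quotients: given *-homomorphisms
`δ : A → M(A ⊗ B)` and `ε : C → M(C ⊗ B)`, a surjective *-homomorphism `φ : A → C`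
satisfying the equivariance condition `(φ ⊗ id) ∘ δ = ε ∘ φ` (where `φ ⊗ id` denotes
the multiplier extension `Φbar` of the induced map `Φ = φ ⊗ id : A ⊗ B → C ⊗ B`), if
`clspan δ(A)(1 ⊗ B) = A ⊗ B` then `clspan ε(C)(1 ⊗ B) = C ⊗ B`.  The products
`δ(a)(1 ⊗ b)`, a priori multipliers, are assumed to lie in `A ⊗ B` (via `pA`), and
similarly for `ε` (via `pC`). -/
theorem nondegenerate_of_equivariant_quotient {A B C TAB TCB : Type*}
    [NonUnitalCStarAlgebra A] [NonUnitalCStarAlgebra B] [NonUnitalCStarAlgebra C]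
    [NonUnitalCStarAlgebra TAB] [NonUnitalCStarAlgebra TCB]
    (tAB : MinTensorProduct A B TAB) (tCB : MinTensorProduct C B TCB)
    (δ : A →⋆ₙₐ[ℂ] 𝓜(ℂ, TAB)) (ε : C →⋆ₙₐ[ℂ] 𝓜(ℂ, TCB))
    (φ : A →⋆ₙₐ[ℂ] C) (hφ : Function.Surjective φ)
    -- the induced map `Φ = φ ⊗ id : A ⊗ B → C ⊗ B` ...
    (Φ : TAB →⋆ₙₐ[ℂ] TCB) (hΦ : ∀ a b, Φ (tAB.tmul a b) = tCB.tmul (φ a) b)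
    -- ... and its extension `Φbar = φ ⊗ id : M(A ⊗ B) → M(C ⊗ B)` to multipliers:
    (Φbar : 𝓜(ℂ, TAB) →⋆ₙₐ[ℂ] 𝓜(ℂ, TCB)) (hΦbar : ∀ t : TAB, Φbar t = (Φ t : 𝓜(ℂ, TCB)))
    -- the multipliers `1 ⊗ b` of `A ⊗ B` and of `C ⊗ B`, intertwined by `Φbar`:
    (oneA : B → 𝓜(ℂ, TAB)) (oneC : B → 𝓜(ℂ, TCB)) (hone : ∀ b, Φbar (oneA b) = oneC b)
    -- equivariance `(φ ⊗ id) ∘ δ = ε ∘ φ`: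
    (hequiv : ∀ a, Φbar (δ a) = ε (φ a))
    -- the products `δ(a)(1 ⊗ b)` and `ε(c)(1 ⊗ b)` lie in the tensor products:
    (pA : A → B → TAB) (hpA : ∀ a b, (pA a b : 𝓜(ℂ, TAB)) = δ a * oneA b)
    (pC : C → B → TCB) (hpC : ∀ c b, (pC c b : 𝓜(ℂ, TCB)) = ε c * oneC b)
    -- nondegeneracy of `δ`:
    (hnd : closure (Submodule.span ℂ {t : TAB | ∃ a b, t = pA a b} : Set TAB) = Set.univ) :
    closure (Submodule.span ℂ {t : TCB | ∃ c b, t = pC c b} : Set TCB) = Set.univ := by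
  have hΦ_gen : ∀ a b, Φ (pA a b) = pC (φ a) b := fun a b =>
    DoubleCentralizer.coe_injective (by rw [← hΦbar, hpA, map_mul, hone, hequiv, hpC])
  have hΦ_dense : DenseRange Φ := by
    refine LinearMap.denseRange_of_dense_span_subset_range (Φ : TAB →ₗ[ℂ] TCB)
      (dense_iff_closure_eq.2 tCB.dense_span) ?_
    rintro _ ⟨c, b, rfl⟩
    obtain ⟨a, rfl⟩ := hφ c
    exact ⟨_, hΦ a b⟩
  rw [← dense_iff_closure_eq] at hnd ⊢
  refine (hnd.span_image_of_denseRange (f := (Φ : TAB →ₗ[ℂ] TCB)) (map_continuous Φ)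
    hΦ_dense).mono (Submodule.span_mono ?_)
  rintro _ ⟨_, ⟨a, b, rfl⟩, rfl⟩
  exact ⟨φ a, b, hΦ_gen a b⟩
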